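/- arXiv:2202.13620 — 7 statements merged into one kernel-verified Lean document; each statement's English description precedes it below -/
import Mathlib

section
/- The complement of a forest F is disconnected if and only if F is connected and F is a star graph (i.e., F has a vertex adjacent to all other vertices and no other edges) with at least two vertices. -/
open SimpleGraph

lemma stmt1_aux {V : Type*} {G : SimpleGraph V} {c x : V} (w : G.Walk x c)
    (hiso : ∀ y : V, ¬ G.Adj y c) : x = c := by
  induction w with
  | nil => rfl
  | cons h' p ih =>
    have hm := ih hiso
    exact absurd (hm ▸ h') (hiso _)

/-- The complement of a forest `F` is disconnected if and only if `F` is connected and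
`F` is a star graph with at least two vertices. -/
theorem stmt1 {V : Type*} [Fintype V] [Nonempty V] (F : SimpleGraph V)
    (hF : F.IsAcyclic) :
    ¬ (Fᶜ).Connected ↔
      (F.Connected ∧
        (∃ c : V, ∀ a b : V, F.Adj a b ↔ (a = c ∨ b = c) ∧ a ≠ b) ∧
        2 ≤ Fintype.card V) := by
  have hpu := SimpleGraph.isAcyclic_iff_path_unique.mp hF
  constructor
  · intro h
    have hpre : ¬ (Fᶜ).Preconnected := fun hp => h ⟨hp⟩
    rw [SimpleGraph.Preconnected] at hpre
    push_neg at hpre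
    obtain ⟨u, v, huv⟩ := hpre
    have huvne : u ≠ v := fun h => huv (h ▸ SimpleGraph.Reachable.refl u)
    have key : ∀ a b : V, (Fᶜ).Reachable u a → ¬ (Fᶜ).Reachable u b → F.Adj a b := by
      intro a b ha hb
      have hne : a ≠ b := fun h => hb (h ▸ ha)
      by_contra hadj
      exact hb (ha.trans (SimpleGraph.Adj.reachable ((SimpleGraph.compl_adj F a b).mpr ⟨hne, hadj⟩)))
    have four : ∀ a b : V, (Fᶜ).Reachable u a → a ≠ u → ¬ (Fᶜ).Reachable u b → b ≠ v → False := by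
      intro a b ha hau hb hbv
      have e1 : F.Adj u v := key u v (SimpleGraph.Reachable.refl u) huv
      have e2 : F.Adj u b := key u b (SimpleGraph.Reachable.refl u) hb
      have e3 : F.Adj a v := key a v ha huv
      have e4 : F.Adj a b := key a b ha hb
      have hva : v ≠ a := fun h => huv (h ▸ ha)
      have hba : b ≠ a := fun h => hb (h ▸ ha)
      have hp1 : (SimpleGraph.Walk.cons e1 (SimpleGraph.Walk.cons e3.symm SimpleGraph.Walk.nil)).IsPath := by
        simp [SimpleGraph.Walk.isPath_def]
        exact ⟨⟨huvne, hau.symm⟩, hva⟩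
      have hp2 : (SimpleGraph.Walk.cons e2 (SimpleGraph.Walk.cons e4.symm SimpleGraph.Walk.nil)).IsPath := by
        simp [SimpleGraph.Walk.isPath_def]
        exact ⟨⟨e2.ne, hau.symm⟩, hba⟩
      have := hpu ⟨_, hp1⟩ ⟨_, hp2⟩
      have hsup := congrArg (fun p : F.Path u a => p.1.support) this
      simp [SimpleGraph.Walk.support_cons] at hsup
      exact hbv hsup.symm
    have hcenter : ∃ c : V, ∀ b : V, b ≠ c → F.Adj c b := by
      by_cases hS : ∃ a, (Fᶜ).Reachable u a ∧ a ≠ u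
      · obtain ⟨a, ha, hau⟩ := hS
        refine ⟨v, fun b hb => ?_⟩
        by_cases hrb : (Fᶜ).Reachable u b
        · exact (key b v hrb huv).symm
        · exact (four a b ha hau hrb hb).elim
      · push_neg at hS
        refine ⟨u, fun b hb => ?_⟩
        have : ¬ (Fᶜ).Reachable u b := fun hr => hb (hS b hr)
        exact key u b (SimpleGraph.Reachable.refl u) this
    obtain ⟨c, hc⟩ := hcenter
    have star : ∀ a b : V, F.Adj a b ↔ (a = c ∨ b = c) ∧ a ≠ b := by
      intro a b
      constructor
      · intro hab
        refine ⟨?_, hab.ne⟩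
        by_contra hcon
        push_neg at hcon
        obtain ⟨hac, hbc⟩ := hcon
        have e1 : F.Adj c a := hc a hac
        have e2 : F.Adj c b := hc b hbc
        have hp1 : (SimpleGraph.Walk.cons hab SimpleGraph.Walk.nil).IsPath := by
          simp [SimpleGraph.Walk.isPath_def, hab.ne]
        have hp2 : (SimpleGraph.Walk.cons e1.symm (SimpleGraph.Walk.cons e2 SimpleGraph.Walk.nil)).IsPath := by
          simp [SimpleGraph.Walk.isPath_def]
          exact ⟨⟨hac, hab.ne⟩, fun h => hbc h.symm⟩
        have := hpu ⟨_, hp1⟩ ⟨_, hp2⟩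
        have hlen := congrArg (fun p : F.Path a b => p.1.length) this
        simp at hlen
      · rintro ⟨h | h, hne⟩
        · subst h
          exact hc b hne.symm
        · subst h
          exact (hc a hne).symm
    have step : ∀ x : V, F.Reachable x c := by
      intro x
      by_cases hx : x = c
      · rw [hx]
      · exact ((hc x hx).symm).reachable
    have hconn : F.Connected := by
      rw [SimpleGraph.connected_iff]
      exact ⟨fun a b => (step a).trans (step b).symm, ‹Nonempty V›⟩
    exact ⟨hconn, ⟨c, star⟩, Fintype.one_lt_card_iff_nontrivial.mpr ⟨u, v, huvne⟩⟩
  · rintro ⟨hconn, ⟨c, hstar⟩, hcard⟩ h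
    have : Nontrivial V := Fintype.one_lt_card_iff_nontrivial.mp hcard
    obtain ⟨b, hb⟩ := exists_ne c
    have hiso : ∀ x : V, ¬ (Fᶜ).Adj x c := by
      intro x hx
      rw [SimpleGraph.compl_adj] at hx
      exact hx.2 ((hstar x c).mpr ⟨Or.inr rfl, hx.1⟩)
    obtain ⟨w⟩ := h.preconnected b c
    exact hb (stmt1_aux w hiso)
end

section
/- Let T be a subdivision of the claw. Then the complement of T is 5-connected if and only if T has at least 9 vertices. -/
/-!
Two facts about a subdivided claw `T` drive the proof: every vertex has degree at most 3, and,
`T` being a tree, no two vertices have two common neighbours. Both are inherited from the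
infinite claw on `ℕ` in which `n` is joined to `n - 3`, into which `T` embeds.

If the complement of a graph is disconnected, the vertices split into two nonempty parts with
every edge between them present in the graph. When both parts have at least two vertices this
gives a 4-cycle, and otherwise one vertex is adjacent to all others. So after deleting at most 4 of
at least 9 vertices of `T`, the complement of what remains is connected. Conversely, if `T`
has at most 8 vertices, deleting the at most 4 vertices outside the closed neighbourhood of
the centre isolates the centre in the complement.
-/

/-- The subdivision of the claw `C_{x,y,z}`: a center vertex attached to three paths
with `x`, `y`, and `z` vertices respectively. -/
def clawSubdiv (x y z : ℕ) : SimpleGraph (Option (Fin x ⊕ Fin y ⊕ Fin z)) :=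
  SimpleGraph.fromRel (fun a b =>
    match a, b with
    | none, some (Sum.inl i) => (i : ℕ) = 0
    | none, some (Sum.inr (Sum.inl i)) => (i : ℕ) = 0
    | none, some (Sum.inr (Sum.inr i)) => (i : ℕ) = 0
    | some (Sum.inl i), some (Sum.inl j) => (i : ℕ) + 1 = (j : ℕ)
    | some (Sum.inr (Sum.inl i)), some (Sum.inr (Sum.inl j)) => (i : ℕ) + 1 = (j : ℕ)
    | some (Sum.inr (Sum.inr i)), some (Sum.inr (Sum.inr j)) => (i : ℕ) + 1 = (j : ℕ)
    | _, _ => False)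

namespace SimpleGraph

variable {α β : Type*}

def IsSquareFree (G : SimpleGraph α) : Prop :=
  ∀ ⦃u v⦄, u ≠ v → (G.commonNeighbors u v).Subsingleton

def parentGraph (p : α → α) : SimpleGraph α :=
  fromRel fun a b => p a = b

/-- Orient each edge of a would-be 4-cycle towards the parent: as `p` is a function, no vertex
has two outgoing edges, so the orientation is a directed cycle along which `r` decreases. -/
theorem isSquareFree_parentGraph {p : α → α} (r : α → ℕ)
    (hr : ∀ a, p a ≠ a → r (p a) < r a) : (parentGraph p).IsSquareFree := by
  intro u v huv a ha b hb
  simp only [mem_commonNeighbors, parentGraph, fromRel_adj] at ha hb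
  have := hr u; have := hr v; have := hr a; have := hr b
  by_contra hab
  grind

variable {G : SimpleGraph α} {G' : SimpleGraph β}

theorem Embedding.encard_neighborSet_le (f : G ↪g G') (v : α) :
    (G.neighborSet v).encard ≤ (G'.neighborSet (f v)).encard :=
  Set.encard_le_encard_of_injOn (fun _ hw => f.map_adj_iff.mpr hw) f.injective.injOn

theorem IsSquareFree.comap (f : G ↪g G') (h : G'.IsSquareFree) : G.IsSquareFree := by
  intro u v huv a ha b hb
  rw [mem_commonNeighbors, ← f.map_adj_iff, ← f.map_adj_iff] at ha hb
  exact f.injective (h (f.injective.ne huv) ((G'.mem_commonNeighbors).mpr ha)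
    ((G'.mem_commonNeighbors).mpr hb))

theorem induce_compl (s : Set α) : Gᶜ.induce s = (G.induce s)ᶜ := by
  ext a b
  simp [Subtype.ext_iff]

variable {d : ℕ}

theorem exists_ne_not_adj (hdeg : ∀ v, (G.neighborSet v).encard ≤ d)
    (hcard : d + 2 ≤ ENat.card α) (w : α) : ∃ x, x ≠ w ∧ ¬G.Adj w x := by
  by_contra! h
  have huniv : Set.univ ⊆ insert w (G.neighborSet w) := fun x _ => (eq_or_ne x w).imp id (h x)
  have hle := (Set.encard_le_encard huniv).trans (Set.encard_insert_le _ _)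
  rw [Set.encard_univ] at hle
  have : (d + 2 : ℕ∞) ≤ d + 1 := hcard.trans (hle.trans (by gcongr; exact hdeg w))
  norm_cast at this
  omega

theorem compl_connected_of_isSquareFree (hdeg : ∀ v, (G.neighborSet v).encard ≤ d)
    (hG : G.IsSquareFree) (hcard : d + 2 ≤ ENat.card α) : Gᶜ.Connected := by
  have : Nontrivial α := (ENat.one_lt_card_iff_nontrivial α).mp <|
    (by norm_cast; omega : (1 : ℕ∞) < d + 2).trans_le hcard
  refine ⟨fun u v => ?_⟩
  by_contra huv
  set A := {a | Gᶜ.Reachable u a}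
  have hcut : ∀ a ∈ A, ∀ b ∉ A, G.Adj a b := fun a ha b hb => by
    by_contra hab
    have hne : a ≠ b := fun h => hb (h ▸ ha)
    exact hb (ha.trans ((compl_adj G a b).mpr ⟨hne, hab⟩).reachable)
  rcases A.subsingleton_or_nontrivial with hA | ⟨a₁, ha₁, a₂, ha₂, ha⟩
  · obtain ⟨x, hxu, hx⟩ := exists_ne_not_adj hdeg hcard u
    exact hx (hcut u Reachable.rfl x fun hxA => hxu (hA hxA Reachable.rfl))
  rcases Aᶜ.subsingleton_or_nontrivial with hB | ⟨b₁, hb₁, b₂, hb₂, hb⟩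
  · obtain ⟨x, hxv, hx⟩ := exists_ne_not_adj hdeg hcard v
    have hxA : x ∈ A := by_contra fun hxA => hxv (hB hxA huv)
    exact hx (hcut x hxA v huv).symm
  · exact hb (hG ha ((G.mem_commonNeighbors).mpr ⟨hcut _ ha₁ _ hb₁, hcut _ ha₂ _ hb₁⟩)
      ((G.mem_commonNeighbors).mpr ⟨hcut _ ha₁ _ hb₂, hcut _ ha₂ _ hb₂⟩))

theorem not_connected_compl_induce_insert_neighborSet {v : α} (hv : (G.neighborSet v).Nonempty) :
    ¬(Gᶜ.induce (insert v (G.neighborSet v))).Connected := by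
  intro hconn
  obtain ⟨w, hw⟩ := hv
  have : Nontrivial (insert v (G.neighborSet v) : Set α) :=
    ⟨⟨v, Set.mem_insert _ _⟩, ⟨w, Set.mem_insert_of_mem _ hw⟩,
      fun h => G.ne_of_adj hw (congrArg Subtype.val h)⟩
  obtain ⟨⟨x, hx⟩, hvx⟩ := hconn.preconnected.exists_adj_of_nontrivial ⟨v, Set.mem_insert _ _⟩
  rw [comap_adj, compl_adj] at hvx
  exact hvx.2 (hx.resolve_left (Ne.symm hvx.1))

end SimpleGraph

open SimpleGraph

def infiniteClaw : SimpleGraph ℕ := parentGraph (· - 3)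

theorem isSquareFree_infiniteClaw : infiniteClaw.IsSquareFree :=
  isSquareFree_parentGraph id fun n hn => by simp only [id]; omega

theorem encard_neighborSet_infiniteClaw_le (n : ℕ) : (infiniteClaw.neighborSet n).encard ≤ 3 := by
  have hsub : infiniteClaw.neighborSet n ⊆ if n = 0 then {1, 2, 3} else {n - 3, n + 3} := by
    intro m hm
    simp only [infiniteClaw, parentGraph, mem_neighborSet, fromRel_adj] at hm
    split_ifs <;> simp <;> omega
  refine (Set.encard_le_encard hsub).trans ?_
  split_ifs
  · exact (Set.encard_insert_le _ _).trans (by rw [Set.encard_pair (by simp)]; rfl)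
  · exact (Set.encard_insert_le _ _).trans (by rw [Set.encard_singleton]; norm_num)

theorem connected_compl_induce_of_embedding_infiniteClaw {α : Type*} {G : SimpleGraph α}
    (f : G ↪g infiniteClaw) {s : Set α} (hs : 5 ≤ s.encard) : (Gᶜ.induce s).Connected := by
  have f' : G.induce s ↪g infiniteClaw := f.comp (Embedding.induce s)
  rw [induce_compl]
  exact compl_connected_of_isSquareFree (d := 3)
    (fun v => (f'.encard_neighborSet_le v).trans (encard_neighborSet_infiniteClaw_le _))
    (isSquareFree_infiniteClaw.comap f') hs

namespace clawSubdiv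

variable {x y z : ℕ}

/-- The `i`-th vertex of the `k`-th branch gets the code `3 * i + k`, the centre `0`. -/
def code : Option (Fin x ⊕ Fin y ⊕ Fin z) → ℕ
  | none => 0
  | some (Sum.inl i) => 3 * i + 1
  | some (Sum.inr (Sum.inl i)) => 3 * i + 2
  | some (Sum.inr (Sum.inr i)) => 3 * i + 3

theorem code_injective : Function.Injective (code (x := x) (y := y) (z := z)) := by
  intro a b h
  rcases a with _ | a | a | a <;> rcases b with _ | b | b | b <;>
    simp_all [code, Fin.ext_iff] <;> omega

theorem infiniteClaw_adj_code_iff {a b : Option (Fin x ⊕ Fin y ⊕ Fin z)} :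
    infiniteClaw.Adj (code a) (code b) ↔ (clawSubdiv x y z).Adj a b := by
  rcases a with _ | a | a | a <;> rcases b with _ | b | b | b <;>
    simp [infiniteClaw, parentGraph, clawSubdiv, code, Fin.ext_iff] <;> omega

def embedding : clawSubdiv x y z ↪g infiniteClaw :=
  ⟨⟨code, code_injective⟩, infiniteClaw_adj_code_iff⟩

theorem three_le_encard_neighborSet_none (hx : 1 ≤ x) (hy : 1 ≤ y) (hz : 1 ≤ z) :
    3 ≤ ((clawSubdiv x y z).neighborSet none).encard := by
  have hsub : {some (.inl ⟨0, hx⟩), some (.inr (.inl ⟨0, hy⟩)), some (.inr (.inr ⟨0, hz⟩))} ⊆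
      (clawSubdiv x y z).neighborSet none := by
    simp [Set.insert_subset_iff, clawSubdiv]
  exact (Set.encard_eq_three.mpr ⟨_, _, _, by simp, by simp, by simp, rfl⟩).ge.trans
    (Set.encard_le_encard hsub)

end clawSubdiv

/-- Let `T` be a subdivision of the claw. Then the complement of `T` is 5-connected
(removing any set of fewer than 5 vertices leaves it connected with at least 2 vertices)
if and only if `T` has at least 9 vertices. -/
theorem stmt2 {V : Type*} [Fintype V] (T : SimpleGraph V)
    (hsub : ∃ x y z : ℕ, 1 ≤ x ∧ 1 ≤ y ∧ 1 ≤ z ∧ Nonempty (T ≃g clawSubdiv x y z)) :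
    (∀ s : Set V, s.ncard < 5 →
        ((Tᶜ.induce sᶜ).Connected ∧ 2 ≤ (sᶜ : Set V).ncard)) ↔
      9 ≤ Fintype.card V := by
  obtain ⟨x, y, z, hx, hy, hz, ⟨e⟩⟩ := hsub
  have hcompl (s : Set V) : s.ncard + sᶜ.ncard = Fintype.card V := by
    rw [Set.ncard_add_ncard_compl, Nat.card_eq_fintype_card]
  constructor
  · intro h
    by_contra! hV
    set c := e.symm none
    have hdeg : 3 ≤ (T.neighborSet c).ncard := by
      have := (clawSubdiv.three_le_encard_neighborSet_none hx hy hz).trans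
        (e.symm.toEmbedding.encard_neighborSet_le none)
      rw [← (Set.toFinite _).cast_ncard_eq] at this
      exact_mod_cast this
    set K := insert c (T.neighborSet c)
    have hK : K.ncard = (T.neighborSet c).ncard + 1 :=
      Set.ncard_insert_of_notMem T.notMem_neighborSet_self
    have hconn := (h Kᶜ (by have := hcompl K; omega)).1
    rw [compl_compl] at hconn
    exact not_connected_compl_induce_insert_neighborSet
      (Set.nonempty_of_ncard_ne_zero (by omega)) hconn
  · intro h9 s hs
    have hW : 5 ≤ sᶜ.ncard := by have := hcompl s; omega
    refine ⟨connected_compl_induce_of_embedding_infiniteClaw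
      (clawSubdiv.embedding.comp e.toEmbedding) ?_, by omega⟩
    rw [← (Set.toFinite _).cast_ncard_eq]
    exact_mod_cast hW
end

section
/- A graph G is paw-free if and only if every connected component of G is either triangle-free or complete multipartite. -/
/-- The paw graph: a triangle `{0,1,2}` plus the vertex `3` adjacent to `0`. -/
def pawGraph : SimpleGraph (Fin 4) :=
  SimpleGraph.fromRel (fun a b =>
    (a = 0 ∧ b = 1) ∨ (a = 0 ∧ b = 2) ∨ (a = 1 ∧ b = 2) ∨ (a = 0 ∧ b = 3))

/-!
In a paw-free graph every neighbour of a triangle vertex is adjacent to one of the other two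
triangle vertices, so it lies in a triangle itself; hence a component containing one triangle
has every vertex in a triangle. In such a component non-adjacency is transitive: if `a ~ c`
and `b` is adjacent to neither, walk from `b` to `a`; the vertex `q` after `b` is, inductively,
adjacent to `a` or `c`, and a short case analysis on a triangle through `q` produces a paw.
So the component is complete multipartite, its parts being the classes of non-adjacency.
Conversely, a paw contains a triangle, and its pendant vertex is non-adjacent to two
adjacent vertices.
-/

namespace SimpleGraph

variable {V : Type*} {G : SimpleGraph V}

def IsPawFree (G : SimpleGraph V) : Prop :=
  ∀ ⦃a b c d : V⦄, G.Adj a b → G.Adj a c → G.Adj b c → G.Adj a d →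
    ¬ G.Adj b d → ¬ G.Adj c d → False

def InTriangle (G : SimpleGraph V) (x : V) : Prop :=
  ∃ y z, G.Adj x y ∧ G.Adj x z ∧ G.Adj y z

theorem isEmpty_pawGraph_embedding_iff : IsEmpty (pawGraph ↪g G) ↔ G.IsPawFree := by
  constructor
  · intro h a b c d hab hac hbc had hbd hcd
    have hdb : ¬ G.Adj d b := fun h => hbd h.symm
    have hdc : ¬ G.Adj d c := fun h => hcd h.symm
    have hbd' : b ≠ d := fun h => hcd (h ▸ hbc.symm)
    have hcd' : c ≠ d := fun h => hbd (h ▸ hbc)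
    refine h.false ⟨⟨![a, b, c, d], fun i j hij => ?_⟩, fun {i j} => ?_⟩
    · fin_cases i <;> fin_cases j <;>
        simp_all [hab.ne, hac.ne, hbc.ne, had.ne, hab.ne.symm, hac.ne.symm, hbc.ne.symm,
          had.ne.symm, hbd'.symm, hcd'.symm]
    · change G.Adj (![a, b, c, d] i) (![a, b, c, d] j) ↔ pawGraph.Adj i j
      fin_cases i <;> fin_cases j <;>
        simp [pawGraph, hab, hac, hbc, had, hab.symm, hac.symm, hbc.symm, had.symm,
          hbd, hcd, hdb, hdc]
  · refine fun hG => ⟨fun f => hG (a := f 0) (b := f 1) (c := f 2) (d := f 3)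
      ?_ ?_ ?_ ?_ ?_ ?_⟩ <;> rw [f.map_adj_iff] <;> simp [pawGraph]

theorem not_adj_trans_of_adj_iff_not {r : V → V → Prop} (hr : Equivalence r)
    (hG : ∀ x y, G.Adj x y ↔ ¬ r x y) {x y z : V} (hxy : ¬ G.Adj x y) (hyz : ¬ G.Adj y z) :
    ¬ G.Adj x z := by
  simp only [hG, not_not] at *
  exact hr.trans hxy hyz

namespace IsPawFree

variable (hG : G.IsPawFree)
include hG

theorem adj_or_adj_of_adj {x y z w : V} (hxy : G.Adj x y) (hxz : G.Adj x z) (hyz : G.Adj y z)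
    (hwx : G.Adj w x) : G.Adj w y ∨ G.Adj w z := by
  by_contra! h
  exact hG hxy hxz hyz hwx.symm (fun h' => h.1 h'.symm) (fun h' => h.2 h'.symm)

theorem inTriangle_of_adj {x w : V} (hx : G.InTriangle x) (hxw : G.Adj x w) :
    G.InTriangle w := by
  obtain ⟨y, z, hxy, hxz, hyz⟩ := hx
  rcases hG.adj_or_adj_of_adj hxy hxz hyz hxw.symm with h | h
  · exact ⟨x, y, hxw.symm, h, hxy⟩
  · exact ⟨x, z, hxw.symm, h, hxz⟩

theorem inTriangle_of_reachable {x w : V} (hx : G.InTriangle x) (h : G.Reachable x w) :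
    G.InTriangle w := by
  obtain ⟨p⟩ := h
  induction p with
  | nil => exact hx
  | cons hadj _ ih => exact ih (hG.inTriangle_of_adj hx hadj)

theorem adj_or_adj_of_path {b q a c : V} (hq : G.InTriangle q)
    (hbq : G.Adj b q) (hqa : G.Adj q a) (hac : G.Adj a c) : G.Adj b a ∨ G.Adj b c := by
  by_cases hqc : G.Adj q c
  · exact hG.adj_or_adj_of_adj hqa hqc hac hbq
  by_contra! hb
  obtain ⟨t, hqt, hat⟩ : ∃ t, G.Adj q t ∧ G.Adj a t := by
    obtain ⟨y, z, hqy, hqz, hyz⟩ := hq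
    rcases hG.adj_or_adj_of_adj hqy hqz hyz hqa.symm with h | h
    · exact ⟨y, hqy, h⟩
    · exact ⟨z, hqz, h⟩
  have hbt : G.Adj b t := (hG.adj_or_adj_of_adj hqa hqt hat hbq).resolve_left hb.1
  by_cases htc : G.Adj t c
  · exact hG hat.symm htc hac hbt.symm (fun h => hb.1 h.symm) (fun h => hb.2 h.symm)
  · exact hG hqa.symm hat hqt hac hqc htc

theorem adj_or_adj_of_reachable {a b c : V} (ha : G.InTriangle a) (hac : G.Adj a c)
    (hb : G.Reachable b a) : G.Adj b a ∨ G.Adj b c := by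
  obtain ⟨p⟩ := hb
  induction p with
  | nil => exact .inr hac
  | @cons b q _ hbq p ih =>
    have hq : G.InTriangle q := hG.inTriangle_of_reachable ha ⟨p.reverse⟩
    rcases ih ha hac with hqa | hqc
    · exact hG.adj_or_adj_of_path hq hbq hqa hac
    · exact (hG.adj_or_adj_of_path hq hbq hqc hac.symm).symm

theorem equivalence_not_adj_of_inTriangle {v : V} (hv : G.InTriangle v) :
    Equivalence fun x y : {w | G.Reachable v w} => ¬ G.Adj x y := by
  refine ⟨fun x => G.irrefl, fun h h' => h h'.symm, fun {x y z} hxy hyz hxz => ?_⟩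
  have hx : G.InTriangle x := hG.inTriangle_of_reachable hv x.2
  rcases hG.adj_or_adj_of_reachable hx hxz (y.2.symm.trans x.2) with h | h
  · exact hxy h.symm
  · exact hyz h

end IsPawFree

end SimpleGraph

open SimpleGraph in
/-- A graph `G` is paw-free iff every connected component of `G` is triangle-free or
complete multipartite. -/
theorem stmt8 {V : Type*} (G : SimpleGraph V) :
    IsEmpty (pawGraph ↪g G) ↔
      ∀ v : V,
        (¬ ∃ a b c : {w : V | G.Reachable v w},
            G.Adj a.1 b.1 ∧ G.Adj a.1 c.1 ∧ G.Adj b.1 c.1) ∨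
        (∃ rel : {w : V | G.Reachable v w} → {w : V | G.Reachable v w} → Prop,
          Equivalence rel ∧
            ∀ a b, (G.induce {w : V | G.Reachable v w}).Adj a b ↔ ¬ rel a b) := by
  rw [isEmpty_pawGraph_embedding_iff]
  constructor
  · intro hG v
    refine or_iff_not_imp_left.2 fun hT => ?_
    obtain ⟨a, b, c, hab, hac, hbc⟩ := not_not.1 hT
    have hv : G.InTriangle v := hG.inTriangle_of_reachable ⟨b, c, hab, hac, hbc⟩ a.2.symm
    exact ⟨_, hG.equivalence_not_adj_of_inTriangle hv, fun x y => induce_adj.trans not_not.symm⟩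
  · intro h a b c d hab hac hbc had hbd hcd
    rcases h a with hT | ⟨rel, hrel, hadj⟩
    · exact hT ⟨⟨a, .rfl⟩, ⟨b, hab.reachable⟩, ⟨c, hac.reachable⟩, hab, hac, hbc⟩
    · exact not_adj_trans_of_adj_iff_not hrel hadj (x := ⟨b, hab.reachable⟩)
        (y := ⟨d, had.reachable⟩) (z := ⟨c, hac.reachable⟩) hbd (fun h => hcd h.symm) hbc
end

section
/- Let H' be a prime graph on t vertices and let H be obtained from H' by replacing each vertex v_i by a nonempty independent set I_i (a module), preserving adjacency between the sets. If H' is k-connected for some k ≥ 1, then H is k-connected. -/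
/-- A set `X` is a module of `G` if every vertex outside `X` is adjacent to all of `X`
or to none of `X`. -/
def IsModule {V : Type*} (G : SimpleGraph V) (X : Set V) : Prop :=
  ∀ c ∉ X, (∀ v ∈ X, G.Adj c v) ∨ (∀ v ∈ X, ¬ G.Adj c v)

/-- A graph is prime if it has at least 3 vertices and all its modules are trivial. -/
def IsPrime {V : Type*} [Fintype V] (G : SimpleGraph V) : Prop :=
  3 ≤ Fintype.card V ∧
    ∀ X : Set V, IsModule G X → X = ∅ ∨ X = Set.univ ∨ ∃ v, X = {v}

/-- `G` is `k`-connected: it has more than `k` vertices and every vertex cut has size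
at least `k`. -/
def IsKConnected {V : Type*} [Fintype V] (G : SimpleGraph V) (k : ℕ) : Prop :=
  k < Fintype.card V ∧ ∀ s : Set V, ¬ (G.induce sᶜ).Connected → k ≤ s.ncard

/-- Let `H'` be a prime graph and `H` be obtained from `H'` by replacing each vertex `i`
by a nonempty independent set (a module), preserving adjacency between the sets.
If `H'` is `k`-connected for some `k ≥ 1`, then `H` is `k`-connected. -/
theorem stmt9 {ι : Type*} [Fintype ι] (H' : SimpleGraph ι) (hprime : IsPrime H')
    (r : ι → ℕ) (hr : ∀ i, 1 ≤ r i)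
    (H : SimpleGraph (Σ i, Fin (r i)))
    (hH : ∀ a b : Σ i, Fin (r i), H.Adj a b ↔ H'.Adj a.1 b.1)
    (k : ℕ) (hk : 1 ≤ k) (hconn : IsKConnected H' k) :
    IsKConnected H k := by
  classical
  obtain ⟨hcard, hcut⟩ := hconn
  constructor
  · calc k < Fintype.card ι := hcard
      _ = ∑ i : ι, 1 := by simp
      _ ≤ ∑ i : ι, r i := Finset.sum_le_sum fun i _ => hr i
      _ = Fintype.card (Σ i, Fin (r i)) := by simp [Fintype.card_sigma]
  · intro s hs
    set s' : Set ι := {i | ∀ x : Fin (r i), (⟨i, x⟩ : Σ i, Fin (r i)) ∈ s} with hs'def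
    -- each element of s' contributes an element of s
    have hinj : s'.ncard ≤ s.ncard := by
      apply Set.ncard_le_ncard_of_injOn (fun i => (⟨i, ⟨0, hr i⟩⟩ : Σ i, Fin (r i)))
      · intro i hi; exact hi _
      · intro i _ j _ hij
        exact congrArg Sigma.fst hij
    -- elements of s'ᶜ have a surviving representative
    have hrep : ∀ i ∈ s'ᶜ, ∃ x : Fin (r i), (⟨i, x⟩ : Σ i, Fin (r i)) ∉ s := by
      intro i hi
      by_contra hcon
      push_neg at hcon
      exact hi hcon
    by_cases hc : (H'.induce s'ᶜ).Connected
    · by_cases h2 : 1 < s'ᶜ.ncard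
      · -- derive contradiction: H.induce sᶜ is connected
        exfalso
        apply hs
        -- key lemma: lift walks
        have key : ∀ (u v : ↥s'ᶜ) (_ : (H'.induce s'ᶜ).Walk u v)
            (a b : Σ i, Fin (r i)) (ha : a ∉ s) (hb : b ∉ s),
            a.1 = u.1 → b.1 = v.1 → a.1 ≠ b.1 →
            (H.induce sᶜ).Reachable ⟨a, ha⟩ ⟨b, hb⟩ := by
          intro u v p
          induction p with
          | nil =>
            intro a b ha hb hau hbv hne
            exact absurd (hau.trans hbv.symm) hne
          | @cons u w v huw q ih =>
            intro a b ha hb hau hbv hne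
            have hadj : H'.Adj u.1 w.1 := huw
            obtain ⟨x, hx⟩ := hrep w.1 w.2
            by_cases hwb : (w : ι) = b.1
            · refine SimpleGraph.Adj.reachable ?_
              show H.Adj a b
              rw [hH]
              rw [hau, hbv]
              rw [hbv, ← hwb] at *
              exact hadj
            · have h1 : (H.induce sᶜ).Reachable ⟨a, ha⟩ ⟨⟨w.1, x⟩, hx⟩ := by
                refine SimpleGraph.Adj.reachable ?_
                show H.Adj a ⟨w.1, x⟩
                rw [hH, hau]
                exact hadj
              exact h1.trans (ih ⟨w.1, x⟩ b hx hb rfl hbv hwb)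
        -- reachability for distinct parts
        have reach_ne : ∀ (a b : Σ i, Fin (r i)) (ha : a ∉ s) (hb : b ∉ s),
            a.1 ≠ b.1 → (H.induce sᶜ).Reachable ⟨a, ha⟩ ⟨b, hb⟩ := by
          intro a b ha hb hne
          have hau : a.1 ∈ s'ᶜ := fun hmem => ha (hmem a.2)
          have hbu : b.1 ∈ s'ᶜ := fun hmem => hb (hmem b.2)
          obtain ⟨p⟩ := hc.preconnected ⟨a.1, hau⟩ ⟨b.1, hbu⟩
          exact key _ _ p a b ha hb rfl rfl hne
        rw [SimpleGraph.connected_iff]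
        constructor
        · rintro ⟨a, ha⟩ ⟨b, hb⟩
          by_cases hab : (⟨a, ha⟩ : ↥sᶜ) = ⟨b, hb⟩
          · rw [hab]
          · by_cases hne : a.1 = b.1
            · obtain ⟨j, hj, hjne⟩ := Set.exists_ne_of_one_lt_ncard h2 a.1
              obtain ⟨x, hx⟩ := hrep j hj
              have h1 := reach_ne a ⟨j, x⟩ ha hx (fun h => hjne h.symm)
              have h2' := reach_ne b ⟨j, x⟩ hb hx (fun h => hjne (hne ▸ h.symm))
              exact h1.trans h2'.symm
            · exact reach_ne a b ha hb hne
        · obtain ⟨i, hi⟩ := Set.nonempty_of_ncard_ne_zero (by omega : s'ᶜ.ncard ≠ 0)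
          obtain ⟨x, hx⟩ := hrep i hi
          exact ⟨⟨⟨i, x⟩, hx⟩⟩
      · -- s'ᶜ has at most one element, so s' is big
        have hsum : s'.ncard + s'ᶜ.ncard = Fintype.card ι := by
          have := Set.ncard_add_ncard_compl s'
          simpa [Nat.card_eq_fintype_card] using this
        have : k ≤ s'.ncard := by omega
        omega
    · have := hcut s' hc
      omega
end

section
/- Let T be a tree that is not a star, and let Q_T be its quotient graph with respect to maximal strong modules. Then each maximal strong module of T is an independent set, and Q_T is a tree. -/
/-- A strong module: a module that does not overlap any other module. -/
def IsStrongModule {V : Type*} (G : SimpleGraph V) (M : Set V) : Prop :=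
  IsModule G M ∧
    ∀ M' : Set V, IsModule G M' → (M ∩ M').Nonempty → M ⊆ M' ∨ M' ⊆ M

/-- In a connected graph, a nonempty proper set has an edge leaving it. -/
lemma cross_edge_aux {V : Type*} {T : SimpleGraph V} {M : Set V} :
    ∀ {a b : V}, T.Walk a b → a ∉ M → b ∈ M → ∃ x ∉ M, ∃ y ∈ M, T.Adj x y := by
  intro a b w
  induction w with
  | nil => intro ha hb; exact absurd hb ha
  | @cons u c b h p ih =>
    intro ha hb
    by_cases hc : c ∈ M
    · exact ⟨u, ha, c, hc, h⟩
    · exact ih hc hb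

lemma cross_edge {V : Type*} {T : SimpleGraph V} (hconn : T.Connected) {M : Set V}
    (hMne : M.Nonempty) (hM : M ≠ Set.univ) : ∃ x ∉ M, ∃ y ∈ M, T.Adj x y := by
  obtain ⟨b, hb⟩ := hMne
  have : ∃ a, a ∉ M := by
    by_contra h
    push_neg at h
    exact hM (Set.eq_univ_of_forall h)
  obtain ⟨a, ha⟩ := this
  obtain ⟨w⟩ := hconn a b
  exact cross_edge_aux w ha hb

/-- Let `T` be a tree that is not a star, `P` the partition of its vertex set into
maximal (proper) strong modules, and `Q_T` the quotient graph.  Then each maximal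
strong module of `T` is an independent set, and `Q_T` is a tree. -/
theorem stmt12 {V ι : Type*} [Fintype V] [Fintype ι]
    (T : SimpleGraph V) (hT : T.IsTree)
    (hnotstar : ¬ ∃ c : V, ∀ a b : V, T.Adj a b ↔ (a = c ∨ b = c) ∧ a ≠ b)
    (P : ι → Set V)
    (hcover : ∀ v : V, ∃! i, v ∈ P i)
    (hne : ∀ i, (P i).Nonempty)
    (hmax : ∀ i, IsStrongModule T (P i) ∧ P i ≠ Set.univ ∧
      ∀ M : Set V, IsStrongModule T M → M ≠ Set.univ → P i ⊆ M → M = P i)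
    (Q : SimpleGraph ι)
    (hQ : ∀ i j, Q.Adj i j ↔ i ≠ j ∧ ∃ a ∈ P i, ∃ b ∈ P j, T.Adj a b) :
    (∀ i, (P i).Pairwise (fun a b => ¬ T.Adj a b)) ∧ Q.IsTree := by
  have hconn := hT.isConnected
  have hacyc := hT.IsAcyclic
  have hpu := SimpleGraph.isAcyclic_iff_path_unique.mp hacyc
  -- distinct modules are disjoint
  have hdisj : ∀ {i j : ι} {v : V}, v ∈ P i → v ∈ P j → i = j := by
    intro i j v hi hj
    obtain ⟨k, -, hk⟩ := hcover v
    exact (hk i hi).trans (hk j hj).symm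
  -- independence
  have hindep : ∀ i, (P i).Pairwise (fun a b => ¬ T.Adj a b) := by
    intro i a ha b hb hab hadj
    obtain ⟨c, hc, y, hy, hcy⟩ := cross_edge hconn (hne i) (hmax i).2.1
    have hall : ∀ v ∈ P i, T.Adj c v := by
      rcases (hmax i).1.1 c hc with h | h
      · exact h
      · exact absurd hcy (h y hy)
    have hca := hall a ha
    have hcb := hall b hb
    -- two distinct paths from a to b : the edge, and via c
    have hac : a ≠ c := fun h => hc (h ▸ ha)
    have hp2 : (SimpleGraph.Walk.cons hca.symm
        (SimpleGraph.Walk.cons hcb (SimpleGraph.Walk.nil : T.Walk b b))).IsPath := by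
      simp [SimpleGraph.Walk.isPath_def, hab, hac, hcb.ne]
    have := hpu (SimpleGraph.Path.singleton hadj) ⟨_, hp2⟩
    have hlen := congrArg (fun p : T.Path a b => p.1.length) this
    simp [SimpleGraph.Path.singleton] at hlen
  -- adjacency between distinct modules is complete
  have hcomplete : ∀ {i j : ι}, i ≠ j → ∀ {a b : V}, a ∈ P i → b ∈ P j → T.Adj a b →
      ∀ x ∈ P i, ∀ y ∈ P j, T.Adj x y := by
    intro i j hij a b ha hb hab x hx y hy
    have haj : a ∉ P j := fun h => hij (hdisj ha h)
    have hallj : ∀ v ∈ P j, T.Adj a v := by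
      rcases (hmax j).1.1 a haj with h | h
      · exact h
      · exact absurd hab (h b hb)
    have hyi : y ∉ P i := fun h => hij (hdisj h hy)
    have halli : ∀ v ∈ P i, T.Adj y v := by
      rcases (hmax i).1.1 y hyi with h | h
      · exact h
      · exact absurd (hallj y hy).symm (h a ha)
    exact (halli x hx).symm
  refine ⟨hindep, ?_, ?_⟩
  · -- connected
    have hVne : Nonempty V := hconn.nonempty
    set idx : V → ι := fun v => (hcover v).choose with hidx_def
    have hidx : ∀ v, v ∈ P (idx v) := fun v => (hcover v).choose_spec.1
    have hNι : Nonempty ι := ⟨idx (Classical.arbitrary V)⟩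
    have key : ∀ {a b : V}, T.Walk a b → Q.Reachable (idx a) (idx b) := by
      intro a b w
      induction w with
      | nil => exact SimpleGraph.Reachable.refl _
      | @cons u v _ h p ih =>
        by_cases huv : idx u = idx v
        · rw [huv]; exact ih
        · refine (SimpleGraph.Adj.reachable ?_).trans ih
          exact (hQ _ _).mpr ⟨huv, u, hidx u, v, hidx v, h⟩
    haveI := hNι
    refine SimpleGraph.Connected.mk ?_
    intro i j
    obtain ⟨a, ha⟩ := hne i
    obtain ⟨b, hb⟩ := hne j
    obtain ⟨w⟩ := hconn a b
    have := key w
    rwa [hdisj (hidx a) ha, hdisj (hidx b) hb] at this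
  · -- acyclic
    set rep : ι → V := fun i => (hne i).choose with hrep_def
    have hrep : ∀ i, rep i ∈ P i := fun i => (hne i).choose_spec
    have hrepinj : Function.Injective rep := fun i j h =>
      hdisj (hrep i) (h ▸ hrep j)
    let f : Q →g T :=
      ⟨rep, by
        intro i j h
        obtain ⟨hij, a, ha, b, hb, hab⟩ := (hQ i j).mp h
        exact hcomplete hij ha hb hab _ (hrep i) _ (hrep j)⟩
    intro v p hp
    exact hacyc (p.map f) ((SimpleGraph.Walk.map_isCycle_iff_of_injective (f := f) hrepinj).mpr hp)
end

section
/- Let G be a graph with an independent module I of size at least 4, and let G' be obtained from G by deleting all but 3 vertices of I. Then there exists S ⊆ V(G) such that complementing the induced subgraph on S makes G paw-free, if and only if there exists S' ⊆ V(G') such that complementing the induced subgraph on S' makes G' paw-free. -/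
/-- Subgraph complementation: `scomp G S` flips the adjacency of every pair of
distinct vertices inside `S`, keeping all other adjacencies. -/
def scomp {V : Type*} (G : SimpleGraph V) (S : Set V) : SimpleGraph V where
  Adj a b := a ≠ b ∧
    ((a ∈ S ∧ b ∈ S ∧ ¬ G.Adj a b) ∨ (¬ (a ∈ S ∧ b ∈ S) ∧ G.Adj a b))
  symm := by
    constructor
    rintro a b ⟨hne, h⟩
    refine ⟨hne.symm, ?_⟩
    rcases h with ⟨ha, hb, hn⟩ | ⟨hn, hadj⟩
    · exact Or.inl ⟨hb, ha, fun h => hn h.symm⟩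
    · exact Or.inr ⟨fun h => hn ⟨h.2, h.1⟩, hadj.symm⟩
  loopless := ⟨fun a h => h.1 rfl⟩

namespace SimpleGraph

variable {V α : Type*}

def Twins (H : SimpleGraph V) (x y : V) : Prop :=
  ∀ w, w ≠ x → w ≠ y → (H.Adj x w ↔ H.Adj y w)

namespace Twins

variable {H : SimpleGraph V} {x y : V}

lemma symm (h : H.Twins x y) : H.Twins y x := fun w hwy hwx => (h w hwx hwy).symm

lemma of_embedding {F : SimpleGraph α} (e : F ↪g H) {k l : α} (h : H.Twins (e k) (e l)) :
    F.Twins k l := fun m hmk hml => by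
  simpa only [e.map_rel_iff] using h (e m) (e.injective.ne hmk) (e.injective.ne hml)

def swapIso [DecidableEq V] (h : H.Twins x y) : H ≃g H where
  toEquiv := Equiv.swap x y
  map_rel_iff' {a b} := by
    have hyx := h.symm
    rw [Equiv.swap_apply_def, Equiv.swap_apply_def]
    split_ifs <;> subst_vars <;> grind [Twins, SimpleGraph.adj_comm, SimpleGraph.irrefl]

end Twins

def Embedding.codRestrict {F : SimpleGraph α} {H : SimpleGraph V} (e : F ↪g H) (W : Set V)
    (hW : ∀ k, e k ∈ W) : F ↪g H.induce W where
  toFun k := ⟨e k, hW k⟩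
  inj' _ _ h := e.injective (congrArg Subtype.val h)
  map_rel_iff' := e.map_rel_iff

theorem nonempty_embedding_induce_of_twins [Finite α] [DecidableEq V]
    {F : SimpleGraph α} {H : SimpleGraph V} {T W : Set V}
    (hT : ∀ x ∈ T, ∀ y ∈ T, H.Twins x y) (hWT : Wᶜ ⊆ T)
    (hroom : ∀ e : F ↪g H, ∀ k, e k ∉ W → ∃ y ∈ T ∩ W, y ∉ Set.range e)
    (e : F ↪g H) : Nonempty (F ↪g H.induce W) := by
  induction hn : {k | e k ∉ W}.ncard using Nat.strong_induction_on generalizing e with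
  | _ n ih =>
  by_cases hin : ∀ k, e k ∈ W
  · exact ⟨e.codRestrict W hin⟩
  · obtain ⟨k, hk⟩ := not_forall.mp hin
    obtain ⟨y, ⟨hyT, hyW⟩, hy⟩ := hroom e k hk
    set e' : F ↪g H := e.trans (hT _ (hWT hk) y hyT).swapIso.toEmbedding
    have hout' : {m | e' m ∉ W} = {m | e m ∉ W} \ {k} := by
      ext m
      have hym : e m ≠ y := fun h => hy ⟨m, h⟩
      rcases eq_or_ne m k with rfl | hmk
      · simp [e', Twins.swapIso, hyW]
      · simp [e', Twins.swapIso, hmk, Equiv.swap_apply_of_ne_of_ne (e.injective.ne hmk) hym]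
    exact ih _ (hn ▸ hout' ▸ Set.ncard_sdiff_singleton_lt_of_mem hk) e' rfl

end SimpleGraph

open SimpleGraph

instance : DecidableRel pawGraph.Adj := fun a b =>
  decidable_of_iff' _ (SimpleGraph.fromRel_adj _ a b)

lemma pawGraph_adj_of_twins {k l : Fin 4} (hkl : k ≠ l) (h : pawGraph.Twins k l) :
    pawGraph.Adj k l := by
  have key : ∀ k l : Fin 4, k ≠ l → pawGraph.Twins k l → pawGraph.Adj k l := by
    unfold Twins; decide
  exact key k l hkl h

lemma pawGraph_twin_unique {k l m : Fin 4} (hkl : k ≠ l) (hkm : k ≠ m)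
    (hl : pawGraph.Twins k l) (hm : pawGraph.Twins k m) : l = m := by
  have key : ∀ k l m : Fin 4, k ≠ l → k ≠ m →
      pawGraph.Twins k l → pawGraph.Twins k m → l = m := by
    unfold Twins; decide
  exact key k l m hkl hkm hl hm

section Paw

variable {V : Type*} {H : SimpleGraph V} {T W : Set V}

lemma eq_of_pawGraph_embedding_mem_isIndepSet (hT : ∀ x ∈ T, ∀ y ∈ T, H.Twins x y)
    (hind : H.IsIndepSet T) (e : pawGraph ↪g H) {k l : Fin 4} (hk : e k ∈ T) (hl : e l ∈ T) :
    k = l := by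
  by_contra hkl
  exact hind hk hl (e.injective.ne hkl)
    (e.map_rel_iff.mpr (pawGraph_adj_of_twins hkl ((hT _ hk _ hl).of_embedding e)))

lemma eq_or_eq_of_pawGraph_embedding_mem (hT : ∀ x ∈ T, ∀ y ∈ T, H.Twins x y)
    (e : pawGraph ↪g H) {k l m : Fin 4} (hk : e k ∈ T) (hl : e l ∈ T) (hm : e m ∈ T) :
    k = l ∨ k = m ∨ l = m := by
  by_contra! h
  exact h.2.2 (pawGraph_twin_unique h.1 h.2.1
    ((hT _ hk _ hl).of_embedding e) ((hT _ hk _ hm).of_embedding e))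

lemma nonempty_pawGraph_embedding_induce_of_isIndepSet [DecidableEq V]
    (hT : ∀ x ∈ T, ∀ y ∈ T, H.Twins x y) (hind : H.IsIndepSet T) (hWT : Wᶜ ⊆ T)
    {j : V} (hj : j ∈ T ∩ W) (e : pawGraph ↪g H) : Nonempty (pawGraph ↪g H.induce W) := by
  refine nonempty_embedding_induce_of_twins hT hWT (fun e k hk => ⟨j, hj, ?_⟩) e
  rintro ⟨m, rfl⟩
  obtain rfl := eq_of_pawGraph_embedding_mem_isIndepSet hT hind e (hWT hk) hj.1
  exact hk hj.2

lemma nonempty_pawGraph_embedding_induce [DecidableEq V]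
    (hT : ∀ x ∈ T, ∀ y ∈ T, H.Twins x y) (hWT : Wᶜ ⊆ T)
    {a b : V} (hab : a ≠ b) (ha : a ∈ T ∩ W) (hb : b ∈ T ∩ W) (e : pawGraph ↪g H) :
    Nonempty (pawGraph ↪g H.induce W) := by
  refine nonempty_embedding_induce_of_twins hT hWT (fun e k hk => ?_) e
  by_contra! hfull
  obtain ⟨l, hl⟩ := hfull a ha
  obtain ⟨m, hm⟩ := hfull b hb
  have hkl : k ≠ l := by rintro rfl; exact hk (hl ▸ ha.2)
  have hkm : k ≠ m := by rintro rfl; exact hk (hm ▸ hb.2)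
  have hlm : l ≠ m := by rintro rfl; exact hab (hl.symm.trans hm)
  have := eq_or_eq_of_pawGraph_embedding_mem hT e (hWT hk) (hl ▸ ha.1) (hm ▸ hb.1)
  tauto

end Paw

section Scomp

variable {V : Type*} {G : SimpleGraph V} {I S : Set V}

lemma scomp_induce {W : Set V} {S' : Set W} (hS : ∀ v : W, v ∈ S' ↔ ↑v ∈ S) :
    scomp (G.induce W) S' = (scomp G S).induce W := by
  ext a b
  simp only [scomp, comap_adj, Function.Embedding.subtype_apply, ne_eq, hS,
    Subtype.val_injective.eq_iff]

lemma IsModule.twins (hmod : IsModule G I) (hind : G.IsIndepSet I) {x y : V}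
    (hx : x ∈ I) (hy : y ∈ I) : G.Twins x y := by
  intro w hwx hwy
  by_cases hw : w ∈ I
  · exact iff_of_false (hind hx hw hwx.symm) (hind hy hw hwy.symm)
  · rcases hmod w hw with h | h
    · exact iff_of_true (h x hx).symm (h y hy).symm
    · exact iff_of_false (fun h' => h x hx h'.symm) (fun h' => h y hy h'.symm)

lemma SimpleGraph.Twins.scomp {x y : V} (h : G.Twins x y) (hS : x ∈ S ↔ y ∈ S) :
    (scomp G S).Twins x y := by
  intro w hwx hwy
  have := h w hwx hwy
  simp only [_root_.scomp, ne_eq]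
  grind

lemma isIndepSet_scomp_sdiff (hind : G.IsIndepSet I) : (scomp G S).IsIndepSet (I \ S) :=
  fun _ hx _ hy hxy ⟨_, h⟩ => h.elim (fun h => hx.2 h.1) (fun h => hind hx.1 hy.1 hxy h.2)

end Scomp

lemma exists_scomp_isEmpty_pawGraph_embedding {V : Type*} {G : SimpleGraph V} {I J : Set V}
    (hmod : IsModule G I) (hind : G.IsIndepSet I) (hJ : J ⊆ I) {a b : V} (hab : a ≠ b)
    (ha : a ∈ J) (hb : b ∈ J) {S' : Set ((I \ J)ᶜ : Set V)}
    (hS' : IsEmpty (pawGraph ↪g scomp (G.induce ((I \ J)ᶜ : Set V)) S')) :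
    ∃ S : Set V, IsEmpty (pawGraph ↪g scomp G S) := by
  classical
  set Sv : Set V := Subtype.val '' S'
  have hSv : Sv ⊆ (I \ J)ᶜ := by rintro _ ⟨v, -, rfl⟩; exact v.2
  have hJW : J ⊆ (I \ J)ᶜ := fun x hx hx' => hx'.2 hx
  by_cases hc : J ⊆ Sv
  · have hI : I ⊆ Sv ∪ I \ J := fun x hx =>
      (em (x ∈ J)).elim (Or.inl ∘ (hc ·)) (Or.inr ⟨hx, ·⟩)
    have hS : ∀ v : ((I \ J)ᶜ : Set V), v ∈ S' ↔ ↑v ∈ Sv ∪ I \ J := fun v =>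
      ⟨fun h => Or.inl ⟨v, h, rfl⟩,
        fun h => h.elim Subtype.val_injective.mem_set_image.mp (absurd · v.2)⟩
    rw [scomp_induce hS] at hS'
    refine ⟨Sv ∪ I \ J, ⟨fun e => hS'.false ?_⟩⟩
    refine (nonempty_pawGraph_embedding_induce (T := I) ?_
      (by rw [compl_compl]; exact Set.sdiff_subset) hab
      ⟨hJ ha, hJW ha⟩ ⟨hJ hb, hJW hb⟩ e).some
    exact fun x hx y hy => (hmod.twins hind hx hy).scomp (iff_of_true (hI hx) (hI hy))
  · obtain ⟨j, hjJ, hjSv⟩ := Set.not_subset.mp hc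
    rw [scomp_induce (S := Sv) fun v => Subtype.val_injective.mem_set_image.symm] at hS'
    refine ⟨Sv, ⟨fun e => hS'.false ?_⟩⟩
    refine (nonempty_pawGraph_embedding_induce_of_isIndepSet (T := I \ Sv) ?_
      (isIndepSet_scomp_sdiff hind)
      (by rw [compl_compl]; exact fun x hx => ⟨hx.1, fun h => hSv h hx⟩)
      ⟨⟨hJ hjJ, hjSv⟩, hJW hjJ⟩ e).some
    exact fun x hx y hy => (hmod.twins hind hx.1 hy.1).scomp (iff_of_false hx.2 hy.2)

theorem stmt15_general {V : Type*} (G : SimpleGraph V) (I : Set V)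
    (hmod : IsModule G I) (hind : I.Pairwise (fun a b => ¬ G.Adj a b))
    (J : Set V) (hJ : J ⊆ I) (hJ3 : J.ncard = 3) :
    (∃ S : Set V, IsEmpty (pawGraph ↪g scomp G S)) ↔
    (∃ S' : Set ((I \ J)ᶜ : Set V),
      IsEmpty (pawGraph ↪g scomp (G.induce ((I \ J)ᶜ : Set V)) S')) := by
  constructor
  · rintro ⟨S, hS⟩
    refine ⟨{v | ↑v ∈ S}, ⟨fun e => hS.false ?_⟩⟩
    rw [scomp_induce (S' := {v | ↑v ∈ S}) (S := S) fun _ => Iff.rfl] at e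
    exact e.trans (Embedding.induce _)
  · rintro ⟨S', hS'⟩
    obtain ⟨a, b, c, hab, -, -, rfl⟩ := Set.ncard_eq_three.mp hJ3
    exact exists_scomp_isEmpty_pawGraph_embedding hmod hind hJ hab (by simp) (by simp) hS'

/-- Let `G` have an independent module `I` of size at least 4, and let `G'` be obtained
from `G` by deleting all but 3 vertices of `I` (keeping `J ⊆ I` with `|J| = 3`).
Then some subgraph complementation makes `G` paw-free iff some subgraph
complementation makes `G'` paw-free. -/
theorem stmt15 {V : Type*} (G : SimpleGraph V) (I : Set V)
    (hmod : IsModule G I) (hind : I.Pairwise (fun a b => ¬ G.Adj a b))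
    (h4 : 4 ≤ I.ncard)
    (J : Set V) (hJ : J ⊆ I) (hJ3 : J.ncard = 3) :
    (∃ S : Set V, IsEmpty (pawGraph ↪g scomp G S)) ↔
    (∃ S' : Set ((I \ J)ᶜ : Set V),
      IsEmpty (pawGraph ↪g scomp (G.induce ((I \ J)ᶜ : Set V)) S')) :=
  stmt15_general G I hmod hind J hJ hJ3
end

section
/- For every k ≥ 4, a 3-SAT formula Φ is satisfiable if and only if the k-SAT formula Φ' obtained by the following transformation has an assignment making at least two literals true in every clause: each 3-clause (ℓ1 ∨ ℓ2 ∨ ℓ3) is first extended to (ℓ1 ∨ ℓ2 ∨ ℓ3 ∨ x) with a single fresh variable x shared by all clauses, and then each 4-clause is expanded into 2^{k−4} k-clauses by appending all combinations of positive/negative literals of k−4 fresh variables. -/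
/-- Variables of the expanded `k`-SAT formula: the original variables `α`, one shared
fresh variable `x` (the `Unit`), and `k - 4` fresh variables `x₁, …, x_{k-4}`. -/
abbrev ExpVar (α : Type*) (k : ℕ) := α ⊕ (Unit ⊕ Fin (k - 4))

/-- Expansion of one 3-clause `C` into the `2^{k-4}` `k`-clauses: first append the
literal `x` positively, then append all sign combinations of `x₁, …, x_{k-4}`. -/
noncomputable def expandClause {α : Type*} (k : ℕ) (C : List (α × Bool)) :
    List (List (ExpVar α k × Bool)) :=
  (Finset.univ : Finset (Fin (k - 4) → Bool)).toList.map (fun s =>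
    C.map (fun l => (Sum.inl l.1, l.2)) ++
      [(Sum.inr (Sum.inl ()), true)] ++
      (List.finRange (k - 4)).map (fun i => (Sum.inr (Sum.inr i), s i)))

/-- The transformed formula: every 3-clause is expanded. -/
noncomputable def expandFormula {α : Type*} (k : ℕ) (Φ : List (List (α × Bool))) :
    List (List (ExpVar α k × Bool)) :=
  Φ.flatMap (expandClause k)

/-- For every `k ≥ 4`, a 3-SAT formula `Φ` (each clause has exactly 3 literals of
distinct variables) is satisfiable iff the expanded `k`-SAT formula admits an
assignment making at least two literals true in every clause. -/
theorem stmt19 {α : Type*} (k : ℕ) (hk : 4 ≤ k)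
    (Φ : List (List (α × Bool)))
    (hΦ : ∀ C ∈ Φ, C.length = 3 ∧ (C.map Prod.fst).Nodup) :
    (∃ σ : α → Bool, ∀ C ∈ Φ, ∃ l ∈ C, σ l.1 = l.2) ↔
    (∃ τ : ExpVar α k → Bool,
      ∀ C ∈ expandFormula k Φ,
        2 ≤ (C.filter (fun l => τ l.1 == l.2)).length) := by
  constructor
  · rintro ⟨σ, hσ⟩
    refine ⟨Sum.elim σ (fun _ => true), ?_⟩
    intro D hD
    rw [expandFormula, List.mem_flatMap] at hD
    obtain ⟨C, hC, hD⟩ := hD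
    rw [expandClause, List.mem_map] at hD
    obtain ⟨s, -, rfl⟩ := hD
    obtain ⟨l, hl, hσl⟩ := hσ C hC
    simp only [List.filter_append, List.filter_cons, List.filter_nil, List.filter_map,
      Function.comp_def, List.length_append, Sum.elim_inr, Sum.elim_inl]
    simp only [beq_self_eq_true, if_true, List.length_cons, List.length_nil, List.length_map]
    have h1 : 0 < (List.filter (fun x => σ x.1 == x.2) C).length :=
      List.length_pos_iff_exists_mem.mpr ⟨l, List.mem_filter.mpr ⟨hl, by simp [hσl]⟩⟩
    omega
  · rintro ⟨τ, hτ⟩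
    refine ⟨fun a => τ (Sum.inl a), ?_⟩
    intro C hC
    set s : Fin (k - 4) → Bool := fun i => !τ (Sum.inr (Sum.inr i)) with hs
    have hmem : (C.map (fun l => ((Sum.inl l.1 : ExpVar α k), l.2)) ++
        [(Sum.inr (Sum.inl ()), true)] ++
        (List.finRange (k - 4)).map (fun i => (Sum.inr (Sum.inr i), s i)))
        ∈ expandFormula k Φ := by
      rw [expandFormula, List.mem_flatMap]
      refine ⟨C, hC, ?_⟩
      rw [expandClause, List.mem_map]
      exact ⟨s, Finset.mem_toList.mpr (Finset.mem_univ s), rfl⟩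
    have h := hτ _ hmem
    simp only [List.filter_append, List.filter_cons, List.filter_map, Function.comp_def,
      hs, List.length_append] at h
    simp at h
    have h1 : 0 < (List.filter (fun x => τ (Sum.inl x.1) == x.2) C).length := by
      split at h <;> simp at h <;> omega
    obtain ⟨⟨v, b⟩, hm⟩ := List.length_pos_iff_exists_mem.mp h1
    obtain ⟨hmC, hp⟩ := List.mem_filter.mp hm
    exact ⟨(v, b), hmC, by simpa using hp⟩
end
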